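/- Let G be a factorizable, non-fixing group of homeomorphisms of a topological manifold M of positive dimension, and suppose the commutator subgroup [G,G] admits a nonempty proper closed invariant subset L ⊆ M (i.e. a proper minimal set of the associated foliation exists). Then [G,G] is not simple. -/

import Mathlib

/-! The pointwise stabiliser `N` of `L` in `[G,G]` is normal because `L` is `[G,G]`-invariant.
Fragmentation combined with the commutator trick produces, for every closed `K` and every point
`q ∉ K`, an element of `[G,G]` fixing `K` and moving `q`. With `K = L` and `q ∉ L` this shows
`N ≠ ⊥`; with `K = ∅` and `q ∈ L` it shows `N ≠ ⊤`. -/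

open Set
open scoped commutatorElement Pointwise

/-- `g` is supported in `U`: the closure of its non-fixed-point set lies in `U`. -/
def SupportedIn {M : Type*} [TopologicalSpace M] (g : Equiv.Perm M) (U : Set M) : Prop :=
  closure {y | g y ≠ y} ⊆ U

/-- `G` is factorizable: every element factors as a finite product of elements of `G`
each supported in a member of any given open cover. -/
def IsFactorizable {M : Type*} [TopologicalSpace M] (G : Subgroup (Equiv.Perm M)) : Prop :=
  ∀ 𝒰 : Set (Set M), (∀ U ∈ 𝒰, IsOpen U) → ⋃₀ 𝒰 = univ → ∀ g ∈ G,
    ∃ l : List (Equiv.Perm M), (∀ f ∈ l, f ∈ G ∧ ∃ U ∈ 𝒰, SupportedIn f U) ∧ l.prod = g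

lemma fixingSubgroup_normal_of_smul_eq {H α : Type*} [Group H] [MulAction H α]
    {s : Set α} (hs : ∀ g : H, g • s = s) : (fixingSubgroup H s).Normal :=
  ⟨fun _ hk g => Set.conj_mem_fixingSubgroup (hs g) hk⟩

lemma SupportedIn.apply_eq_of_notMem {M : Type*} [TopologicalSpace M] {f : Equiv.Perm M}
    {U : Set M} (hf : SupportedIn f U) {y : M} (hy : y ∉ U) : f y = y := by
  by_contra h
  exact hy (hf (subset_closure h))

lemma SupportedIn.mem_of_apply_ne {M : Type*} [TopologicalSpace M] {f : Equiv.Perm M}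
    {U : Set M} (hf : SupportedIn f U) {y : M} (hy : f y ≠ y) : y ∈ U :=
  hf (subset_closure hy)

namespace IsFactorizable

variable {M : Type*} [TopologicalSpace M] {G : Subgroup (Equiv.Perm M)}

/-- Factor `g` along the cover `{V, {q}ᶜ}`: some factor moves `q`, so it is supported in `V`. -/
lemma exists_supportedIn_apply_ne [T1Space M] (hfact : IsFactorizable G) {q : M}
    {g : Equiv.Perm M} (hg : g ∈ G) (hgq : g q ≠ q) {V : Set M} (hV : IsOpen V)
    (hqV : q ∈ V) : ∃ f ∈ G, f q ≠ q ∧ SupportedIn f V := by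
  have hcover : ⋃₀ {V, {q}ᶜ} = univ := by
    rw [sUnion_pair]
    exact eq_univ_of_forall fun x => (em (x = q)).imp (fun h : x = q => h ▸ hqV) id
  obtain ⟨l, hl, rfl⟩ := hfact {V, {q}ᶜ}
    (by rintro U (rfl | rfl); exacts [hV, isOpen_compl_singleton]) hcover g hg
  obtain ⟨f, hfl, hfq⟩ : ∃ f ∈ l, f q ≠ q := by
    by_contra! h
    exact hgq (list_prod_mem (S := MulAction.stabilizer (Equiv.Perm M) q) h)
  obtain ⟨hfG, U, hU, hf⟩ := hl f hfl
  rcases hU with rfl | rfl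
  · exact ⟨f, hfG, hfq, hf⟩
  · exact absurd rfl (hf.mem_of_apply_ne hfq)

/-- Take `g₁ ∈ G` moving `q` and supported in `Kᶜ`, then `f ∈ G` moving `q` and supported
in a neighbourhood `B ⊆ Kᶜ` of `q` with `g₁⁻¹ q ∉ B`. Then `⁅f, g₁⁆ q = f q ≠ q`, while all
four factors of `⁅f, g₁⁆` fix `K`. -/
lemma exists_commutator_mem_apply_ne [T2Space M] (hcont : ∀ g ∈ G, Continuous g)
    (hfact : IsFactorizable G) {K : Set M} (hK : IsClosed K) {q : M} (hqK : q ∉ K)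
    {g : Equiv.Perm M} (hg : g ∈ G) (hgq : g q ≠ q) :
    ∃ c ∈ ⁅G, G⁆, c q ≠ q ∧ ∀ x ∈ K, c x = x := by
  obtain ⟨g₁, hg₁G, hg₁q, hg₁K⟩ :=
    hfact.exists_supportedIn_apply_ne hg hgq hK.isOpen_compl hqK
  obtain ⟨W₁, W₂, hW₁, hW₂, hqW₁, hqW₂, hW⟩ := t2_separation (Ne.symm hg₁q)
  obtain ⟨f, hfG, hfq, hfB⟩ := hfact.exists_supportedIn_apply_ne hg hgq
    ((hK.isOpen_compl.inter hW₁).inter (hW₂.preimage (hcont g₁ hg₁G))) ⟨⟨hqK, hqW₁⟩, hqW₂⟩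
  have hfK : SupportedIn f Kᶜ := hfB.trans fun y hy => hy.1.1
  refine ⟨⁅f, g₁⁆, Subgroup.commutator_mem_commutator hfG hg₁G, ?_, fun x hx => ?_⟩
  · have hB : g₁⁻¹ q ∉ Kᶜ ∩ W₁ ∩ g₁ ⁻¹' W₂ := fun h =>
      disjoint_left.mp hW hqW₁ (by simpa using h.2)
    simpa only [commutatorElement_def, Equiv.Perm.mul_apply,
      Equiv.Perm.inv_eq_iff_eq.mpr (hfB.apply_eq_of_notMem hB).symm,
      Equiv.Perm.eq_inv_iff_eq.mp (rfl : g₁⁻¹ q = g₁⁻¹ q)] using hfq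
  · have hfx := hfK.apply_eq_of_notMem (not_not_intro hx)
    have hg₁x := hg₁K.apply_eq_of_notMem (not_not_intro hx)
    simp only [commutatorElement_def, Equiv.Perm.mul_apply,
      Equiv.Perm.inv_eq_iff_eq.mpr hfx.symm, Equiv.Perm.inv_eq_iff_eq.mpr hg₁x.symm, hfx, hg₁x]

end IsFactorizable

theorem not_simple_of_proper_minimal_set_general {M : Type*}
    [TopologicalSpace M] [T2Space M]
    (G : Subgroup (Equiv.Perm M)) (hcont : ∀ g ∈ G, Continuous ⇑g)
    (hfact : IsFactorizable G) (hnonfix : ∀ x : M, ∃ g ∈ G, g x ≠ x)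
    (L : Set M) (hLclosed : IsClosed L) (hLne : L.Nonempty) (hLproper : L ≠ univ)
    (hLinv : ∀ g ∈ ⁅G, G⁆, ⇑g '' L = L) :
    ¬ IsSimpleGroup ↥⁅G, G⁆ := by
  intro hsimple
  have hN : (fixingSubgroup ↥⁅G, G⁆ L).Normal :=
    fixingSubgroup_normal_of_smul_eq fun g => hLinv g g.2
  rcases hN.eq_bot_or_eq_top with hbot | htop
  · obtain ⟨p, hp⟩ := (ne_univ_iff_exists_notMem L).mp hLproper
    obtain ⟨g, hg, hgp⟩ := hnonfix p
    obtain ⟨c, hc, hcp, hcL⟩ := hfact.exists_commutator_mem_apply_ne hcont hLclosed hp hg hgp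
    have hc1 : (⟨c, hc⟩ : ↥⁅G, G⁆) ∈ fixingSubgroup ↥⁅G, G⁆ L :=
      (mem_fixingSubgroup_iff _).mpr hcL
    rw [hbot, Subgroup.mem_bot, Subgroup.mk_eq_one] at hc1
    exact hcp (by rw [hc1]; rfl)
  · obtain ⟨x, hx⟩ := hLne
    obtain ⟨g, hg, hgx⟩ := hnonfix x
    obtain ⟨c, hc, hcx, -⟩ := hfact.exists_commutator_mem_apply_ne hcont isClosed_empty
      (notMem_empty x) hg hgx
    have : (⟨c, hc⟩ : ↥⁅G, G⁆) ∈ fixingSubgroup ↥⁅G, G⁆ L := htop ▸ Subgroup.mem_top _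
    exact hcx ((mem_fixingSubgroup_iff _).mp this x hx)

/-- If a factorizable, non-fixing group of homeomorphisms of a topological manifold of
positive dimension is such that `[G,G]` admits a nonempty proper closed invariant set,
then `[G,G]` is not simple. -/
theorem not_simple_of_proper_minimal_set (n : ℕ) (hn : 0 < n) {M : Type*}
    [TopologicalSpace M] [T2Space M] [ChartedSpace (EuclideanSpace ℝ (Fin n)) M]
    (G : Subgroup (Equiv.Perm M)) (hcont : ∀ g ∈ G, Continuous ⇑g)
    (hfact : IsFactorizable G) (hnonfix : ∀ x : M, ∃ g ∈ G, g x ≠ x)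
    (L : Set M) (hLclosed : IsClosed L) (hLne : L.Nonempty) (hLproper : L ≠ univ)
    (hLinv : ∀ g ∈ ⁅G, G⁆, ⇑g '' L = L) :
    ¬ IsSimpleGroup ↥⁅G, G⁆ :=
  not_simple_of_proper_minimal_set_general G hcont hfact hnonfix L hLclosed hLne hLproper hLinv
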